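/- arXiv:2602.10436 — 5 statements merged into one kernel-verified Lean document; each statement's English description precedes it below -/
import Mathlib

section
/- Suppose sequences (z^k) and (z̃^k) satisfy (A3). Then there exists K ∈ ℕ such that for every k ≥ K the iterate z^k = (x^k, y^k) satisfies: y^k ≥ 0 componentwise, y^k_j = 0 and g_j(x^k) < 0 for every j ∈ N, and y^k_j > 0 for every j ∈ B_a; that is, z^k belongs to the identifiable set M. -/
noncomputable section

open scoped ENNReal
open Classical Filter Topology

/-- The primal-dual space ℝⁿ × ℝᵐ with the Euclidean norm. -/
abbrev Zsp (n m : ℕ) := EuclideanSpace ℝ (Fin n ⊕ Fin m)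

/-- The primal (x-) part of a primal-dual point. -/
def xPart {n m : ℕ} (z : Zsp n m) : Fin n → ℝ := fun i => z (Sum.inl i)

/-- The dual (y-) part of a primal-dual point. -/
def yPart {n m : ℕ} (z : Zsp n m) : Fin m → ℝ := fun j => z (Sum.inr j)

/-- Convex subdifferential of `φ : ℝⁿ → ℝ` at `x`. -/
def subdiff {n : ℕ} (φ : (Fin n → ℝ) → ℝ) (x : Fin n → ℝ) : Set (Fin n → ℝ) :=
  {u | ∀ w, φ x + ∑ i, u i * (w i - x i) ≤ φ w}

/-- Normal cone to the nonnegative orthant ℝᵐ₊ at `y`. -/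
def normalConePos {m : ℕ} (y : Fin m → ℝ) : Set (Fin m → ℝ) :=
  {v | ∀ w : Fin m → ℝ, (∀ j, 0 ≤ w j) → ∑ j, v j * (w j - y j) ≤ 0}

/-- The saddle subdifferential F(z); empty unless the dual part is nonnegative. -/
def saddleF {n m : ℕ} (f : (Fin n → ℝ) → ℝ) (g : Fin m → (Fin n → ℝ) → ℝ)
    (z : Zsp n m) : Set (Zsp n m) :=
  {uv | (∀ j, 0 ≤ yPart z j) ∧
    (∃ a ∈ subdiff f (xPart z), ∃ b : Fin m → Fin n → ℝ,
        (∀ j, b j ∈ subdiff (g j) (xPart z)) ∧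
        ∀ i, xPart uv i = a i + ∑ j, yPart z j * b j i) ∧
    (∃ v ∈ normalConePos (yPart z), ∀ j, yPart uv j = -(g j (xPart z)) + v j)}

/-- The primal-dual solution set S* = {z : 0 ∈ F(z)}. -/
def Sstar {n m : ℕ} (f : (Fin n → ℝ) → ℝ) (g : Fin m → (Fin n → ℝ) → ℝ) :
    Set (Zsp n m) := {z | (0 : Zsp n m) ∈ saddleF f g z}

/-- A primal-dual point regarded as a plain vector indexed by `Fin n ⊕ Fin m`. -/
def toVec {n m : ℕ} (z : Zsp n m) : (Fin n ⊕ Fin m) → ℝ := fun i => z i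

/-- The P-seminorm ‖z‖_P = √(zᵀ P z). -/
def pnorm {n m : ℕ} (P : Matrix (Fin n ⊕ Fin m) (Fin n ⊕ Fin m) ℝ) (z : Zsp n m) : ℝ :=
  Real.sqrt (dotProduct (toVec z) (P.mulVec (toVec z)))

/-- P-distance from a point to a set. -/
def distP {n m : ℕ} (P : Matrix (Fin n ⊕ Fin m) (Fin n ⊕ Fin m) ℝ) (z : Zsp n m)
    (S : Set (Zsp n m)) : ℝ := sInf ((fun w => pnorm P (z - w)) '' S)

/-- ℝ≥0∞-valued Q-seminorm distance from the origin to a set (equal to ⊤ on ∅). -/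
def edistQ {n m : ℕ} (Q : Matrix (Fin n ⊕ Fin m) (Fin n ⊕ Fin m) ℝ)
    (A : Set (Zsp n m)) : ℝ≥0∞ := ⨅ w ∈ A, ENNReal.ofReal (pnorm Q w)

/-- Metric subregularity of the saddle subdifferential near the solution set. -/
def MetricSubregular {n m : ℕ} (f : (Fin n → ℝ) → ℝ)
    (g : Fin m → (Fin n → ℝ) → ℝ) : Prop :=
  ∀ t > (0:ℝ), ∃ α > (0:ℝ), ∀ z : Zsp n m, Metric.infDist z (Sstar f g) ≤ t →
    ENNReal.ofReal (α * Metric.infDist z (Sstar f g)) ≤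
      EMetric.infEdist (0 : Zsp n m) (saddleF f g z)

/-- `l` is the largest eigenvalue of `P`. -/
def IsMaxEigen {ι : Type*} [Fintype ι] (P : Matrix ι ι ℝ) (l : ℝ) : Prop :=
  (∃ v : ι → ℝ, v ≠ 0 ∧ P.mulVec v = l • v) ∧
  ∀ (μ : ℝ) (v : ι → ℝ), v ≠ 0 → P.mulVec v = μ • v → μ ≤ l

/-- The global metric subregularity modulus α_G over the τ-neighborhood of S*. -/
def alphaG {n m : ℕ} (f : (Fin n → ℝ) → ℝ) (g : Fin m → (Fin n → ℝ) → ℝ) (τ : ℝ) : ℝ :=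
  sInf {r : ℝ | ∃ z : Zsp n m, Metric.infDist z (Sstar f g) ≤ τ ∧
    0 < Metric.infDist z (Sstar f g) ∧ (saddleF f g z).Nonempty ∧
    r = Metric.infDist (0 : Zsp n m) (saddleF f g z) / Metric.infDist z (Sstar f g)}

/-!
Complementary slackness at `z*` gives `y*_j = 0` for `j ∈ N`. The Lipschitz bounds of (A3) make
`g_j ∘ x` upper semicontinuous and `y_j` continuous at `z*` for `‖·‖_P`. Hence for `j ∈ N`,
eventually `g_j(x̃^{k+1}) < g_j(x*)/2 < 0` while `y^k_j → 0`, so the dual step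
`y^k_j + η g_j(x̃^{k+1})` is negative and is projected to exactly `0`; for `j ∈ B_a`,
`y^k_j → y*_j > 0`.
-/

lemma pnorm_zero {n m : ℕ} (P : Matrix (Fin n ⊕ Fin m) (Fin n ⊕ Fin m) ℝ) :
    pnorm P (0 : Zsp n m) = 0 := by
  simp [pnorm, show toVec (0 : Zsp n m) = 0 from rfl]

lemma eq_zero_of_mem_normalConePos_of_neg {m : ℕ} {y v : Fin m → ℝ} (hy : ∀ j, 0 ≤ y j)
    (hv : v ∈ normalConePos y) {j : Fin m} (hvj : v j < 0) : y j = 0 := by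
  have hw : ∀ i, 0 ≤ Function.update y j 0 i := by
    intro i
    rcases eq_or_ne i j with rfl | hij
    · simp
    · simpa [Function.update_of_ne hij] using hy i
  have hsum := hv _ hw
  rw [Fintype.sum_eq_single j fun i hij => by simp [Function.update_of_ne hij]] at hsum
  simp only [Function.update_self, zero_sub] at hsum
  nlinarith [hy j]

lemma yPart_eq_zero_of_mem_Sstar {n m : ℕ} {f : (Fin n → ℝ) → ℝ} {g : Fin m → (Fin n → ℝ) → ℝ}
    {z : Zsp n m} (hz : z ∈ Sstar f g) {j : Fin m} (hj : g j (xPart z) < 0) :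
    yPart z j = 0 := by
  obtain ⟨hy, -, v, hv, hveq⟩ := hz
  have hvj : v j = g j (xPart z) := by
    have := hveq j
    simp only [yPart, PiLp.zero_apply] at this
    linarith
  exact eq_zero_of_mem_normalConePos_of_neg hy hv (hvj ▸ hj)

/-- The Lipschitz condition (iii) of assumption (A3). -/
def PLipschitzNear {n m : ℕ} (P : Matrix (Fin n ⊕ Fin m) (Fin n ⊕ Fin m) ℝ)
    (g : Fin m → (Fin n → ℝ) → ℝ) (zstar : Zsp n m) : Prop :=
  ∀ t : ℝ, 0 < t → ∀ j : Fin m, ∃ Lx : ℝ, 0 < Lx ∧ ∃ Ly : ℝ, 0 < Ly ∧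
    ∀ w w' : Zsp n m, pnorm P (w - zstar) < t → pnorm P (w' - zstar) < t →
      g j (xPart w) - g j (xPart w') ≤ Lx * pnorm P (w - w') ∧
      |yPart w j - yPart w' j| ≤ Ly * pnorm P (w - w')

namespace PLipschitzNear

variable {n m : ℕ} {P : Matrix (Fin n ⊕ Fin m) (Fin n ⊕ Fin m) ℝ}
  {g : Fin m → (Fin n → ℝ) → ℝ} {zstar : Zsp n m} {ι : Type*} {l : Filter ι} {w : ι → Zsp n m}

lemma eventually_bounds (h : PLipschitzNear P g zstar)
    (hw : Tendsto (fun i => pnorm P (w i - zstar)) l (𝓝 0)) (j : Fin m) :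
    ∃ Lx Ly : ℝ, ∀ᶠ i in l,
      g j (xPart (w i)) - g j (xPart zstar) ≤ Lx * pnorm P (w i - zstar) ∧
      |yPart (w i) j - yPart zstar j| ≤ Ly * pnorm P (w i - zstar) := by
  obtain ⟨Lx, -, Ly, -, hL⟩ := h 1 one_pos j
  refine ⟨Lx, Ly, ?_⟩
  filter_upwards [hw.eventually (gt_mem_nhds one_pos)] with i hi
  exact hL (w i) zstar hi (by simp [pnorm_zero])

lemma eventually_g_lt (h : PLipschitzNear P g zstar)
    (hw : Tendsto (fun i => pnorm P (w i - zstar)) l (𝓝 0)) (j : Fin m) {b : ℝ}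
    (hb : g j (xPart zstar) < b) : ∀ᶠ i in l, g j (xPart (w i)) < b := by
  obtain ⟨Lx, _, hL⟩ := h.eventually_bounds hw j
  have hlim : Tendsto (fun i => g j (xPart zstar) + Lx * pnorm P (w i - zstar)) l
      (𝓝 (g j (xPart zstar))) := by
    simpa using tendsto_const_nhds.add (hw.const_mul Lx)
  filter_upwards [hL, hlim.eventually (gt_mem_nhds hb)] with i hi hlt
  linarith [hi.1]

lemma tendsto_yPart (h : PLipschitzNear P g zstar)
    (hw : Tendsto (fun i => pnorm P (w i - zstar)) l (𝓝 0)) (j : Fin m) :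
    Tendsto (fun i => yPart (w i) j) l (𝓝 (yPart zstar j)) := by
  obtain ⟨_, Ly, hL⟩ := h.eventually_bounds hw j
  rw [tendsto_iff_norm_sub_tendsto_zero]
  refine squeeze_zero' (Eventually.of_forall fun i => norm_nonneg _) ?_
    (by simpa using hw.const_mul Ly)
  filter_upwards [hL] with i hi
  exact hi.2

end PLipschitzNear

lemma eventually_eq_zero_of_projected_ascent {y b : ℕ → ℝ} {η β : ℝ} (hη : 0 < η) (hβ : β < 0)
    (hup : ∀ k, y (k + 1) = max (y k + η * b (k + 1)) 0)
    (hy : Tendsto y atTop (𝓝 0)) (hb : ∀ᶠ k in atTop, b k < β) :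
    ∀ᶠ k in atTop, y k = 0 := by
  have hshift : ∀ᶠ k in atTop, y (k + 1) = 0 := by
    filter_upwards [hy.eventually (gt_mem_nhds (neg_pos.2 (mul_neg_of_pos_of_neg hη hβ))),
      (tendsto_add_atTop_nat 1).eventually hb] with k hyk hbk
    rw [hup k, max_eq_right]
    nlinarith
  rw [← map_add_atTop_eq_nat 1]
  exact hshift

theorem stmt1_general
    (n m : ℕ)
    (f : (Fin n → ℝ) → ℝ) (g : Fin m → (Fin n → ℝ) → ℝ)
    (P : Matrix (Fin n ⊕ Fin m) (Fin n ⊕ Fin m) ℝ)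
    (z zt : ℕ → Zsp n m) (zstar : Zsp n m)
    -- (A3)(i): convergence to a solution z* in the P-norm
    (hzstar : zstar ∈ Sstar f g)
    (hconv : Tendsto (fun k => pnorm P (z k - zstar)) atTop (nhds 0))
    (hconvt : Tendsto (fun k => pnorm P (zt k - zstar)) atTop (nhds 0))
    -- (A3)(ii): projected dual-ascent update
    (η : ℝ) (hη : 0 < η)
    (hdualup : ∀ k : ℕ, ∀ j : Fin m,
      yPart (z (k + 1)) j = max (yPart (z k) j + η * g j (xPart (zt (k + 1)))) 0)
    -- (A3)(iii): P-Lipschitz continuity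
    (hLip : ∀ t : ℝ, 0 < t → ∀ j : Fin m, ∃ Lx : ℝ, 0 < Lx ∧ ∃ Ly : ℝ, 0 < Ly ∧
      ∀ w w' : Zsp n m, pnorm P (w - zstar) < t → pnorm P (w' - zstar) < t →
        g j (xPart w) - g j (xPart w') ≤ Lx * pnorm P (w - w') ∧
        |yPart w j - yPart w' j| ≤ Ly * pnorm P (w - w')) :
    -- conclusion: finite identification of the set M
    ∃ K : ℕ, ∀ k : ℕ, K ≤ k →
      (∀ j : Fin m, 0 ≤ yPart (z k) j) ∧
      (∀ j : Fin m, g j (xPart zstar) < 0 →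
        yPart (z k) j = 0 ∧ g j (xPart (z k)) < 0) ∧
      (∀ j : Fin m, g j (xPart zstar) = 0 → 0 < yPart zstar j →
        0 < yPart (z k) j) := by
  have hL : PLipschitzNear P g zstar := hLip
  have hnonneg : ∀ᶠ k in atTop, ∀ j, 0 ≤ yPart (z k) j := by
    rw [← map_add_atTop_eq_nat 1, eventually_map]
    exact Eventually.of_forall fun k j => (hdualup k j).symm ▸ le_max_right _ _
  have hinactive (j : Fin m) (hj : g j (xPart zstar) < 0) :
      ∀ᶠ k in atTop, yPart (z k) j = 0 ∧ g j (xPart (z k)) < 0 := by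
    have hy : Tendsto (fun k => yPart (z k) j) atTop (𝓝 0) :=
      yPart_eq_zero_of_mem_Sstar hzstar hj ▸ hL.tendsto_yPart hconv j
    have hhalf : g j (xPart zstar) < g j (xPart zstar) / 2 := by linarith
    exact (eventually_eq_zero_of_projected_ascent hη (by linarith) (hdualup · j) hy
      (hL.eventually_g_lt hconvt j hhalf)).and (hL.eventually_g_lt hconv j hj)
  have hactive (j : Fin m) (hj : 0 < yPart zstar j) : ∀ᶠ k in atTop, 0 < yPart (z k) j :=
    (hL.tendsto_yPart hconv j).eventually (lt_mem_nhds hj)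
  exact eventually_atTop.1 <| hnonneg.and <|
    (eventually_all.2 fun j => eventually_imp_distrib_left.2 (hinactive j)).and
    (eventually_all.2 fun j => eventually_imp_distrib_left.2 fun _ =>
      eventually_imp_distrib_left.2 (hactive j))

/-- Theorem: asymptotic identification of the active set under (A3). -/
theorem stmt1
    (n m : ℕ) (hn : 0 < n) (hm : 0 < m)
    (f : (Fin n → ℝ) → ℝ) (g : Fin m → (Fin n → ℝ) → ℝ)
    (hf : ConvexOn ℝ Set.univ f) (hg : ∀ j, ConvexOn ℝ Set.univ (g j))
    (hS : (Sstar f g).Nonempty)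
    (P : Matrix (Fin n ⊕ Fin m) (Fin n ⊕ Fin m) ℝ) (hP : P.PosDef)
    (z zt : ℕ → Zsp n m) (zstar : Zsp n m)
    -- (A3)(i): convergence to a solution z* in the P-norm
    (hzstar : zstar ∈ Sstar f g)
    (hconv : Tendsto (fun k => pnorm P (z k - zstar)) atTop (nhds 0))
    (hconvt : Tendsto (fun k => pnorm P (zt k - zstar)) atTop (nhds 0))
    -- (A3)(ii): projected dual-ascent update
    (η : ℝ) (hη : 0 < η)
    (hdualup : ∀ k : ℕ, ∀ j : Fin m,
      yPart (z (k + 1)) j = max (yPart (z k) j + η * g j (xPart (zt (k + 1)))) 0)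
    -- (A3)(iii): P-Lipschitz continuity
    (hLip : ∀ t : ℝ, 0 < t → ∀ j : Fin m, ∃ Lx : ℝ, 0 < Lx ∧ ∃ Ly : ℝ, 0 < Ly ∧
      ∀ w w' : Zsp n m, pnorm P (w - zstar) < t → pnorm P (w' - zstar) < t →
        g j (xPart w) - g j (xPart w') ≤ Lx * pnorm P (w - w') ∧
        |yPart w j - yPart w' j| ≤ Ly * pnorm P (w - w')) :
    -- conclusion: finite identification of the set M
    ∃ K : ℕ, ∀ k : ℕ, K ≤ k →
      (∀ j : Fin m, 0 ≤ yPart (z k) j) ∧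
      (∀ j : Fin m, g j (xPart zstar) < 0 →
        yPart (z k) j = 0 ∧ g j (xPart (z k)) < 0) ∧
      (∀ j : Fin m, g j (xPart zstar) = 0 → 0 < yPart zstar j →
        0 < yPart (z k) j) :=
  stmt1_general n m f g P z zt zstar hzstar hconv hconvt η hη hdualup hLip
end
end

section
/- Let P be a nonzero symmetric positive semidefinite (n+m)×(n+m) matrix, S ⊆ ℝⁿ⁺ᵐ a set, α > 0, and z ∈ ℝⁿ⁺ᵐ a point satisfying α·dist₂(z, S) ≤ dist₂(0, F(z)). Then (α/√λmax(P))·max{dist₂(z, S), dist_P(z, S)/√λmax(P)} ≤ dist_{P†}(0, F(z) ∩ range(P)). -/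
noncomputable section

open scoped ENNReal
open Classical Filter Topology

/-- `B` is the Moore–Penrose pseudoinverse of `A`. -/
def IsMoorePenrose {ι : Type*} [Fintype ι] (A B : Matrix ι ι ℝ) : Prop :=
  A * B * A = A ∧ B * A * B = B ∧
  (A * B).transpose = A * B ∧ (B * A).transpose = B * A

/-- ℝ≥0∞-valued P-seminorm distance from a point to a set (⊤ on the empty set). -/
def edistPto {n m : ℕ} (P : Matrix (Fin n ⊕ Fin m) (Fin n ⊕ Fin m) ℝ)
    (z : Zsp n m) (S : Set (Zsp n m)) : ℝ≥0∞ :=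
  ⨅ w ∈ S, ENNReal.ofReal (pnorm P (z - w))

/-- The range (column space) of `P`, regarded as a subset of the primal-dual space. -/
def rangeSet {n m : ℕ} (P : Matrix (Fin n ⊕ Fin m) (Fin n ⊕ Fin m) ℝ) :
    Set (Zsp n m) := {w | ∃ v : (Fin n ⊕ Fin m) → ℝ, P.mulVec v = toVec w}

/-!
Because `λmax` bounds the Rayleigh quotient of `P`, `‖u‖_P ≤ √λmax ‖u‖`; hence
`dist_P(z, S) / √λmax ≤ dist₂(z, S)` and the maximum is `dist₂(z, S)`. For `w = P v` in the
range of `P` we have `w = P (P† w)`, so Cauchy–Schwarz for the form of `P` gives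
`‖w‖⁴ ≤ ‖w‖_P² ‖w‖_{P†}² ≤ λmax ‖w‖² ‖w‖_{P†}²`, i.e. `‖w‖ ≤ √λmax ‖w‖_{P†}`. Taking
`w ∈ F(z) ∩ range(P)` and combining with `α dist₂(z, S) ≤ dist₂(0, F(z)) ≤ ‖w‖` proves the bound.
-/

open Matrix

section Spectral

variable {ι : Type*} [Fintype ι]

theorem Matrix.PosSemidef.dotProduct_mulVec_sq_le {A : Matrix ι ι ℝ} (hA : A.PosSemidef)
    (x y : ι → ℝ) : (x ⬝ᵥ A *ᵥ y) ^ 2 ≤ (x ⬝ᵥ A *ᵥ x) * (y ⬝ᵥ A *ᵥ y) := by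
  have hsymm : y ⬝ᵥ A *ᵥ x = x ⬝ᵥ A *ᵥ y := by
    rw [dotProduct_mulVec x, dotProduct_comm, ← mulVec_transpose,
      ← conjTranspose_eq_transpose_of_trivial, hA.isHermitian.eq]
  have := LinearMap.BilinForm.apply_mul_apply_le_of_forall_zero_le (toLinearMap₂' ℝ A)
    (fun v => by simpa [toLinearMap₂'_apply'] using hA.dotProduct_mulVec_nonneg v) x y
  simpa only [toLinearMap₂'_apply', hsymm, sq] using this

theorem IsMaxEigen.nonneg {A : Matrix ι ι ℝ} (hA : A.PosSemidef) {l : ℝ}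
    (hl : IsMaxEigen A l) : 0 ≤ l := by
  obtain ⟨v, hv0, hv⟩ := hl.1
  have h := hA.dotProduct_mulVec_nonneg v
  simp only [star_trivial, hv, dotProduct_smul, smul_eq_mul] at h
  exact nonneg_of_mul_nonneg_left h (dotProduct_self_star_pos_iff.mpr hv0)

theorem IsMaxEigen.pos {A : Matrix ι ι ℝ} (hA : A.PosSemidef) (hA0 : A ≠ 0) {l : ℝ}
    (hl : IsMaxEigen A l) : 0 < l := by
  obtain ⟨v, t, ht0, hv0, hv⟩ := hA.isHermitian.exists_eigenvector_of_ne_zero hA0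
  have h := hA.dotProduct_mulVec_nonneg v
  simp only [star_trivial, hv, dotProduct_smul, smul_eq_mul] at h
  have ht : 0 < t := (nonneg_of_mul_nonneg_left h (dotProduct_self_star_pos_iff.mpr hv0)).lt_of_ne
    ht0.symm
  exact ht.trans_le (hl.2 t v hv0 hv)

open scoped MatrixOrder in
theorem IsMaxEigen.dotProduct_mulVec_le [DecidableEq ι] {A : Matrix ι ι ℝ} (hA : A.IsHermitian)
    {l : ℝ} (hl : IsMaxEigen A l) (v : ι → ℝ) : v ⬝ᵥ A *ᵥ v ≤ l * (v ⬝ᵥ v) := by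
  have hle : A ≤ algebraMap ℝ _ l := by
    refine le_algebraMap_of_spectrum_le fun x hx => ?_
    rw [← spectrum_toLin', ← Module.End.hasEigenvalue_iff_mem_spectrum] at hx
    obtain ⟨w, hw⟩ := hx.exists_hasEigenvector
    exact hl.2 x w hw.2 hw.apply_eq_smul
  have := (sub_nonneg.mpr hle).posSemidef.dotProduct_mulVec_nonneg v
  simpa only [star_trivial, sub_mulVec, dotProduct_sub, Algebra.algebraMap_eq_smul_one,
    smul_mulVec, one_mulVec, dotProduct_smul, smul_eq_mul, sub_nonneg] using this

theorem IsMaxEigen.dotProduct_self_le_of_mul_mul_eq_self [DecidableEq ι] {A B : Matrix ι ι ℝ}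
    (hA : A.PosSemidef) {l : ℝ} (hl : IsMaxEigen A l) (hAB : A * B * A = A) {v w : ι → ℝ}
    (hw : A *ᵥ v = w) : w ⬝ᵥ w ≤ l * (w ⬝ᵥ B *ᵥ w) := by
  have hABw : A *ᵥ (B *ᵥ w) = w := by rw [← hw, mulVec_mulVec, mulVec_mulVec, hAB]
  have hcs := hA.dotProduct_mulVec_sq_le w (B *ᵥ w)
  have hB := hA.dotProduct_mulVec_nonneg (B *ᵥ w)
  rw [hABw, dotProduct_comm (B *ᵥ w)] at hcs
  rw [star_trivial, hABw, dotProduct_comm] at hB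
  have hray := hl.dotProduct_mulVec_le hA.isHermitian w
  have hww : 0 ≤ w ⬝ᵥ w := by simpa using dotProduct_star_self_nonneg w
  rcases hww.eq_or_lt with h0 | h0
  · rw [← h0]; exact mul_nonneg (hl.nonneg hA) hB
  · have : (w ⬝ᵥ w) * (w ⬝ᵥ w) ≤ (w ⬝ᵥ w) * (l * (w ⬝ᵥ B *ᵥ w)) := by
      calc (w ⬝ᵥ w) * (w ⬝ᵥ w) ≤ (w ⬝ᵥ A *ᵥ w) * (w ⬝ᵥ B *ᵥ w) := by rw [← sq]; exact hcs
        _ ≤ l * (w ⬝ᵥ w) * (w ⬝ᵥ B *ᵥ w) := mul_le_mul_of_nonneg_right hray hB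
        _ = _ := by ring
    exact le_of_mul_le_mul_left this h0

end Spectral

section PrimalDual

variable {n m : ℕ} {P : Matrix (Fin n ⊕ Fin m) (Fin n ⊕ Fin m) ℝ} {l : ℝ}

theorem norm_eq_sqrt_dotProduct_toVec (u : Zsp n m) : ‖u‖ = √(toVec u ⬝ᵥ toVec u) := by
  simp [EuclideanSpace.norm_eq, toVec, dotProduct, sq]

theorem pnorm_le_sqrt_mul_norm (hP : P.IsHermitian) (hl : IsMaxEigen P l) (u : Zsp n m) :
    pnorm P u ≤ √l * ‖u‖ := by
  have huu : 0 ≤ toVec u ⬝ᵥ toVec u := by simpa using dotProduct_star_self_nonneg (toVec u)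
  rw [norm_eq_sqrt_dotProduct_toVec, pnorm, ← Real.sqrt_mul' _ huu]
  exact Real.sqrt_le_sqrt (hl.dotProduct_mulVec_le hP _)

theorem norm_le_sqrt_mul_pnorm_of_mem_rangeSet (hP : P.PosSemidef) (hl : IsMaxEigen P l)
    {Pd : Matrix (Fin n ⊕ Fin m) (Fin n ⊕ Fin m) ℝ} (hPd : P * Pd * P = P) {w : Zsp n m}
    (hw : w ∈ rangeSet P) : ‖w‖ ≤ √l * pnorm Pd w := by
  obtain ⟨v, hv⟩ := hw
  rw [norm_eq_sqrt_dotProduct_toVec, pnorm, ← Real.sqrt_mul (hl.nonneg hP)]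
  exact Real.sqrt_le_sqrt (hl.dotProduct_self_le_of_mul_mul_eq_self hP hPd hv)

theorem edistPto_div_le_infEDist (hP : P.IsHermitian) (hl : IsMaxEigen P l) (z : Zsp n m)
    (S : Set (Zsp n m)) : edistPto P z S / ENNReal.ofReal √l ≤ Metric.infEDist z S := by
  refine Metric.le_infEDist.mpr fun s hs => ENNReal.div_le_of_le_mul' ?_
  calc edistPto P z S ≤ ENNReal.ofReal (pnorm P (z - s)) := iInf₂_le s hs
    _ ≤ ENNReal.ofReal (√l * ‖z - s‖) :=
      ENNReal.ofReal_le_ofReal (pnorm_le_sqrt_mul_norm hP hl _)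
    _ = ENNReal.ofReal √l * edist z s := by
      rw [ENNReal.ofReal_mul (Real.sqrt_nonneg _), edist_dist, dist_eq_norm]

theorem infEDist_zero_div_le_edistQ (hP : P.PosSemidef) (hl : IsMaxEigen P l)
    {Pd : Matrix (Fin n ⊕ Fin m) (Fin n ⊕ Fin m) ℝ} (hPd : P * Pd * P = P) (A : Set (Zsp n m)) :
    Metric.infEDist 0 A / ENNReal.ofReal √l ≤ edistQ Pd (A ∩ rangeSet P) := by
  refine le_iInf₂ fun w ⟨hwA, hwR⟩ => ENNReal.div_le_of_le_mul' ?_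
  calc Metric.infEDist 0 A ≤ ENNReal.ofReal ‖w‖ :=
      (Metric.infEDist_le_edist_of_mem hwA).trans_eq (by rw [edist_dist, dist_zero_left])
    _ ≤ ENNReal.ofReal (√l * pnorm Pd w) :=
      ENNReal.ofReal_le_ofReal (norm_le_sqrt_mul_pnorm_of_mem_rangeSet hP hl hPd hwR)
    _ = ENNReal.ofReal √l * ENNReal.ofReal (pnorm Pd w) :=
      ENNReal.ofReal_mul (Real.sqrt_nonneg _)

end PrimalDual

theorem stmt8_general
    (n m : ℕ)
    (f : (Fin n → ℝ) → ℝ) (g : Fin m → (Fin n → ℝ) → ℝ)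
    (P : Matrix (Fin n ⊕ Fin m) (Fin n ⊕ Fin m) ℝ)
    (hP : P.PosSemidef) (hP0 : P ≠ 0)
    (lmax : ℝ) (hlmax : IsMaxEigen P lmax)
    (Pd : Matrix (Fin n ⊕ Fin m) (Fin n ⊕ Fin m) ℝ) (hPd : IsMoorePenrose P Pd)
    (S : Set (Zsp n m)) (α : ℝ) (z : Zsp n m)
    (hsub : ENNReal.ofReal α * EMetric.infEdist z S ≤
      EMetric.infEdist (0 : Zsp n m) (saddleF f g z)) :
    ENNReal.ofReal (α / Real.sqrt lmax) *
      max (EMetric.infEdist z S)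
        (edistPto P z S / ENNReal.ofReal (Real.sqrt lmax)) ≤
    edistQ Pd (saddleF f g z ∩ rangeSet P) := by
  have hsqrt : 0 < √lmax := Real.sqrt_pos.mpr (hlmax.pos hP hP0)
  unfold EMetric.infEdist at hsub ⊢
  rw [max_eq_left (edistPto_div_le_infEDist hP.isHermitian hlmax z S),
    ENNReal.ofReal_div_of_pos hsqrt, ← ENNReal.mul_div_right_comm]
  calc ENNReal.ofReal α * Metric.infEDist z S / ENNReal.ofReal √lmax
      ≤ Metric.infEDist 0 (saddleF f g z) / ENNReal.ofReal √lmax := by gcongr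
    _ ≤ edistQ Pd (saddleF f g z ∩ rangeSet P) := infEDist_zero_div_le_edistQ hP hlmax hPd.1 _

/-- Lemma: Euclidean metric subregularity implies the P-seminorm bound. -/
theorem stmt8
    (n m : ℕ) (hn : 0 < n) (hm : 0 < m)
    (f : (Fin n → ℝ) → ℝ) (g : Fin m → (Fin n → ℝ) → ℝ)
    (hf : ConvexOn ℝ Set.univ f) (hg : ∀ j, ConvexOn ℝ Set.univ (g j))
    (P : Matrix (Fin n ⊕ Fin m) (Fin n ⊕ Fin m) ℝ)
    (hP : P.PosSemidef) (hP0 : P ≠ 0)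
    (lmax : ℝ) (hlmax : IsMaxEigen P lmax)
    (Pd : Matrix (Fin n ⊕ Fin m) (Fin n ⊕ Fin m) ℝ) (hPd : IsMoorePenrose P Pd)
    (S : Set (Zsp n m)) (α : ℝ) (hα : 0 < α) (z : Zsp n m)
    (hsub : ENNReal.ofReal α * EMetric.infEdist z S ≤
      EMetric.infEdist (0 : Zsp n m) (saddleF f g z)) :
    ENNReal.ofReal (α / Real.sqrt lmax) *
      max (EMetric.infEdist z S)
        (edistPto P z S / ENNReal.ofReal (Real.sqrt lmax)) ≤
    edistQ Pd (saddleF f g z ∩ rangeSet P) :=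
  stmt8_general n m f g P hP hP0 lmax hlmax Pd hPd S α z hsub
end
end

section
/- Let T : ℝᵈ → ℝᵈ be a map, M : ℝᵈ ⇉ ℝᵈ a monotone set-valued operator, and P a symmetric positive semidefinite d×d matrix such that P(u − T(u)) ∈ M(T(u)) for every u ∈ ℝᵈ. Then T is firmly nonexpansive in the P-seminorm: for all u, v ∈ ℝᵈ, ‖T(u) − T(v)‖_P² + ‖(u − T(u)) − (v − T(v))‖_P² ≤ ‖u − v‖_P². -/
/-! With `a = T u - T v` and `b = (u - T u) - (v - T v)` we have `u - v = a + b`, so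
`‖u - v‖_P² = ‖a‖_P² + ‖b‖_P² + 2 aᵀPb` by symmetry of `P`. Applying monotonicity of `M` to
`P(u - T u) ∈ M(T u)` and `P(v - T v) ∈ M(T v)` gives exactly `aᵀPb ≥ 0`. -/

open Matrix

namespace Matrix

variable {n R : Type*} [Fintype n]

theorem IsSymm.dotProduct_mulVec_comm [CommSemiring R] {P : Matrix n n R} (hP : P.IsSymm)
    (a b : n → R) : b ⬝ᵥ P *ᵥ a = a ⬝ᵥ P *ᵥ b := by
  rw [dotProduct_mulVec, ← mulVec_transpose, hP.eq, dotProduct_comm]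

theorem IsSymm.dotProduct_mulVec_add_self [CommRing R] {P : Matrix n n R} (hP : P.IsSymm)
    (a b : n → R) :
    (a + b) ⬝ᵥ P *ᵥ (a + b) = a ⬝ᵥ P *ᵥ a + b ⬝ᵥ P *ᵥ b + 2 * (a ⬝ᵥ P *ᵥ b) := by
  rw [mulVec_add, dotProduct_add, add_dotProduct, add_dotProduct, hP.dotProduct_mulVec_comm a b]
  ring

theorem IsSymm.dotProduct_mulVec_add_le [CommRing R] [PartialOrder R] [IsOrderedRing R]
    {P : Matrix n n R} (hP : P.IsSymm) {a b : n → R} (hab : 0 ≤ a ⬝ᵥ P *ᵥ b) :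
    a ⬝ᵥ P *ᵥ a + b ⬝ᵥ P *ᵥ b ≤ (a + b) ⬝ᵥ P *ᵥ (a + b) := by
  rw [hP.dotProduct_mulVec_add_self]
  exact le_add_of_nonneg_right (mul_nonneg zero_le_two hab)

end Matrix

/-- Proposition: firm nonexpansiveness in the P-seminorm. -/
theorem stmt9
    (d : ℕ) (T : (Fin d → ℝ) → (Fin d → ℝ))
    (M : (Fin d → ℝ) → Set (Fin d → ℝ))
    (hM : ∀ x y p q : Fin d → ℝ, p ∈ M x → q ∈ M y →
      0 ≤ ∑ i, (x i - y i) * (p i - q i))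
    (P : Matrix (Fin d) (Fin d) ℝ) (hP : P.PosSemidef)
    (hT : ∀ u : Fin d → ℝ, P.mulVec (u - T u) ∈ M (T u)) :
    ∀ u v : Fin d → ℝ,
      Real.sqrt (dotProduct (T u - T v) (P.mulVec (T u - T v))) ^ 2 +
        Real.sqrt (dotProduct ((u - T u) - (v - T v))
          (P.mulVec ((u - T u) - (v - T v)))) ^ 2 ≤
      Real.sqrt (dotProduct (u - v) (P.mulVec (u - v))) ^ 2 := by
  intro u v
  have hcross : 0 ≤ (T u - T v) ⬝ᵥ P *ᵥ ((u - T u) - (v - T v)) := by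
    simpa only [mulVec_sub, dotProduct, Pi.sub_apply] using hM _ _ _ _ (hT u) (hT v)
  have hsplit : u - v = (T u - T v) + ((u - T u) - (v - T v)) := by abel
  have hQ (x : Fin d → ℝ) : 0 ≤ x ⬝ᵥ P *ᵥ x := by
    simpa only [star_trivial] using hP.dotProduct_mulVec_nonneg x
  simp only [Real.sq_sqrt (hQ _)]
  rw [hsplit]
  exact (isHermitian_iff_isSymm.mp hP.isHermitian).dotProduct_mulVec_add_le hcross
end

section
/- Suppose z* = (x*, y*) satisfies g_j(x*) < 0 for every j ∈ N and y*_j > 0 for every j ∈ B_a, suppose the radius of active-set stability δ_G is finite, and let δ_A be the unique fixed point of Δ. Then for every θ ∈ (0, 1) and every z = (x, y) with ‖z − z*‖_P ≤ θ·δ_A: −g_j(x) ≥ (1 − θ)·L̄ˣ_j(δ_A)·δ_A for every j ∈ N, and y_j ≥ (1 − θ)·L̄ʸ_j(δ_A)·δ_A for every j ∈ B_a. In particular, every z = (x, y) with ‖z − z*‖_P < δ_A satisfies g_j(x) < 0 for every j ∈ N and y_j > 0 for every j ∈ B_a. -/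
noncomputable section

open scoped ENNReal
open Classical Filter Topology

/-- The optimal primal Lipschitz modulus L̄ˣ_j(t) on the P-ball of radius t around z*. -/
def Lxbar {n m : ℕ} (g : Fin m → (Fin n → ℝ) → ℝ)
    (P : Matrix (Fin n ⊕ Fin m) (Fin n ⊕ Fin m) ℝ) (zstar : Zsp n m)
    (j : Fin m) (t : ℝ) : ℝ :=
  sSup {r : ℝ | ∃ w : Zsp n m, 0 < pnorm P (w - zstar) ∧ pnorm P (w - zstar) ≤ t ∧
    r = max (g j (xPart w) - g j (xPart zstar)) 0 / pnorm P (w - zstar)}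

/-- The optimal dual Lipschitz modulus L̄ʸ_j(t) on the P-ball of radius t around z*. -/
def Lybar {n m : ℕ} (P : Matrix (Fin n ⊕ Fin m) (Fin n ⊕ Fin m) ℝ) (zstar : Zsp n m)
    (j : Fin m) (t : ℝ) : ℝ :=
  sSup {r : ℝ | ∃ w : Zsp n m, 0 < pnorm P (w - zstar) ∧ pnorm P (w - zstar) ≤ t ∧
    r = max (yPart zstar j - yPart w j) 0 / pnorm P (w - zstar)}

/-- The set of radii of active-set stability around z*. -/
def stabSet {n m : ℕ} (g : Fin m → (Fin n → ℝ) → ℝ)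
    (P : Matrix (Fin n ⊕ Fin m) (Fin n ⊕ Fin m) ℝ) (zstar : Zsp n m) : Set ℝ :=
  {t : ℝ | 0 < t ∧ ∀ w : Zsp n m, pnorm P (w - zstar) < t →
    (∀ j, g j (xPart zstar) < 0 → g j (xPart w) < 0) ∧
    (∀ j, g j (xPart zstar) = 0 → 0 < yPart zstar j → 0 < yPart w j)}

/-- The radius of active-set stability δ. -/
def deltaG {n m : ℕ} (g : Fin m → (Fin n → ℝ) → ℝ)
    (P : Matrix (Fin n ⊕ Fin m) (Fin n ⊕ Fin m) ℝ) (zstar : Zsp n m) : ℝ :=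
  sSup (stabSet g P zstar)

/-- The identifiable set M associated with the limit solution z*. -/
def Mset {n m : ℕ} (g : Fin m → (Fin n → ℝ) → ℝ) (zstar : Zsp n m) :
    Set (Zsp n m) :=
  {w | (∀ j, 0 ≤ yPart w j) ∧
    (∀ j, g j (xPart zstar) < 0 → g j (xPart w) < 0 ∧ yPart w j = 0) ∧
    (∀ j, g j (xPart zstar) = 0 → 0 < yPart zstar j → 0 < yPart w j)}

/-- The dual function h(y) = inf_x (f(x) + ⟨y, G(x)⟩), with values in EReal. -/
def hdualFn {n m : ℕ} (f : (Fin n → ℝ) → ℝ) (g : Fin m → (Fin n → ℝ) → ℝ)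
    (y : Fin m → ℝ) : EReal :=
  ⨅ x : Fin n → ℝ, ((f x + ∑ j, y j * g j x : ℝ) : EReal)

/-- The solution set S*_L of the reduced system (only constraints indexed by B). -/
def SstarL {n m : ℕ} (f : (Fin n → ℝ) → ℝ) (g : Fin m → (Fin n → ℝ) → ℝ)
    (zstar : Zsp n m) : Set (Zsp n m) :=
  {z | ((f (xPart z) : ℝ) : EReal) ≤ hdualFn f g (yPart z) ∧
    (∀ j, g j (xPart zstar) = 0 → g j (xPart z) ≤ 0) ∧
    ∀ j, 0 ≤ yPart z j}

/-- The local metric subregularity modulus α_L. -/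
def alphaL {n m : ℕ} (f : (Fin n → ℝ) → ℝ) (g : Fin m → (Fin n → ℝ) → ℝ)
    (zstar : Zsp n m) (τ : ℝ) : ℝ :=
  sInf {r : ℝ | ∃ z : Zsp n m, Metric.infDist z (Sstar f g) ≤ τ ∧
    0 < Metric.infDist z (SstarL f g zstar) ∧ (saddleF f g z).Nonempty ∧
    r = Metric.infDist (0 : Zsp n m) (saddleF f g z) /
      Metric.infDist z (SstarL f g zstar)}

/-- The restricted metric subregularity modulus α_M over M ∩ B_P(z*, δ/2). -/
def alphaM {n m : ℕ} (f : (Fin n → ℝ) → ℝ) (g : Fin m → (Fin n → ℝ) → ℝ)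
    (P : Matrix (Fin n ⊕ Fin m) (Fin n ⊕ Fin m) ℝ) (zstar : Zsp n m)
    (τ δ : ℝ) : ℝ :=
  sInf {r : ℝ | ∃ z : Zsp n m, Metric.infDist z (Sstar f g) ≤ τ ∧
    pnorm P (z - zstar) < δ / 2 ∧ z ∈ Mset g zstar ∧
    0 < Metric.infDist z (Sstar f g) ∧ (saddleF f g z).Nonempty ∧
    r = Metric.infDist (0 : Zsp n m) (saddleF f g z) /
      Metric.infDist z (Sstar f g)}

/-- The function Δ, with values in ℝ≥0∞ (conventions: a/0 = ∞ for a > 0, inf ∅ = ∞). -/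
def DeltaFn {n m : ℕ} (g : Fin m → (Fin n → ℝ) → ℝ)
    (P : Matrix (Fin n ⊕ Fin m) (Fin n ⊕ Fin m) ℝ) (zstar : Zsp n m)
    (t : ℝ) : ℝ≥0∞ :=
  min
    (⨅ j ∈ {j : Fin m | g j (xPart zstar) < 0},
      ENNReal.ofReal (-(g j (xPart zstar))) / ENNReal.ofReal (Lxbar g P zstar j t))
    (⨅ j ∈ {j : Fin m | g j (xPart zstar) = 0 ∧ 0 < yPart zstar j},
      ENNReal.ofReal (yPart zstar j) / ENNReal.ofReal (Lybar P zstar j t))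

/-!
On the `δ_A`-ball, the optimal moduli `L̄` bound how far `g_j(x)` and `y_j` can move from their
values at `z*`: the change is at most `L̄_j(δ_A) · ‖z − z*‖_P`. The fixed-point equation
`Δ(δ_A) = δ_A` implies that `L̄_j(δ_A) · δ_A` is at most the margin `−g_j(x*)`, resp. `y*_j`, so
at `P`-distance at most `θ δ_A` at least `(1 − θ) L̄_j(δ_A) δ_A` of the margin is left. The only
analytic input is that these suprema are finite: `g_j` is convex, hence Lipschitz on bounded sets,
and `‖·‖_P` dominates the Euclidean norm because `P` is positive definite.
-/

open Set Metric Matrix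

theorem Matrix.PosDef.exists_pos_mul_sq_norm_le {ι : Type*} [Fintype ι] {P : Matrix ι ι ℝ}
    (hP : P.PosDef) :
    ∃ μ > 0, ∀ v : EuclideanSpace ℝ ι, μ * ‖v‖ ^ 2 ≤ v.ofLp ⬝ᵥ P *ᵥ v.ofLp := by
  set q : EuclideanSpace ℝ ι → ℝ := fun v => v.ofLp ⬝ᵥ P *ᵥ v.ofLp
  have hq : Continuous q := by fun_prop
  have hq_smul (s : ℝ) (v : EuclideanSpace ℝ ι) : q (s • v) = s ^ 2 * q v := by
    simp only [q, WithLp.ofLp_smul]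
    rw [mulVec_smul, smul_dotProduct, dotProduct_smul, smul_eq_mul, smul_eq_mul]
    ring
  obtain ⟨μ, hμ, hμq⟩ := (isCompact_sphere (0 : EuclideanSpace ℝ ι) 1).exists_forall_le'
    hq.continuousOn fun u hu => by
      have hu0 : u.ofLp ≠ 0 := by
        rintro h
        simp [show u = 0 from congrArg (WithLp.toLp 2) h] at hu
      simpa using hP.dotProduct_mulVec_pos hu0
  refine ⟨μ, hμ, fun v => ?_⟩
  rcases eq_or_ne v 0 with rfl | hv
  · simp
  have hv' : 0 < ‖v‖ := norm_pos_iff.2 hv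
  have hunit : ‖v‖⁻¹ • v ∈ sphere (0 : EuclideanSpace ℝ ι) 1 := by
    rw [mem_sphere_zero_iff_norm, norm_smul, norm_inv, norm_norm, inv_mul_cancel₀ hv'.ne']
  have hμv := hμq _ hunit
  rwa [hq_smul, inv_pow, ← div_eq_inv_mul, le_div_iff₀ (by positivity)] at hμv

theorem exists_pos_mul_norm_le_pnorm {n m : ℕ} {P : Matrix (Fin n ⊕ Fin m) (Fin n ⊕ Fin m) ℝ}
    (hP : P.PosDef) : ∃ c > 0, ∀ z : Zsp n m, c * ‖z‖ ≤ pnorm P z := by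
  obtain ⟨μ, hμ, hμP⟩ := hP.exists_pos_mul_sq_norm_le
  refine ⟨√μ, Real.sqrt_pos.2 hμ, fun z => ?_⟩
  calc √μ * ‖z‖ = √(μ * ‖z‖ ^ 2) := by rw [Real.sqrt_mul hμ.le, Real.sqrt_sq (norm_nonneg z)]
    _ ≤ pnorm P z := Real.sqrt_le_sqrt (hμP z)

theorem pnorm_nonneg {n m : ℕ} (P : Matrix (Fin n ⊕ Fin m) (Fin n ⊕ Fin m) ℝ) (z : Zsp n m) :
    0 ≤ pnorm P z :=
  Real.sqrt_nonneg _

theorem norm_xPart_le {n m : ℕ} (z : Zsp n m) : ‖xPart z‖ ≤ ‖z‖ :=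
  (pi_norm_le_iff_of_nonneg (norm_nonneg z)).2 fun i => PiLp.norm_apply_le z (Sum.inl i)

theorem abs_yPart_le {n m : ℕ} (z : Zsp n m) (j : Fin m) : |yPart z j| ≤ ‖z‖ :=
  PiLp.norm_apply_le z (Sum.inr j)

theorem ConvexOn.exists_lipschitzOnWith_closedBall {E : Type*} [NormedAddCommGroup E]
    [NormedSpace ℝ E] [FiniteDimensional ℝ E] {φ : E → ℝ} (hφ : ConvexOn ℝ univ φ) (x₀ : E)
    (R : ℝ) : ∃ K, LipschitzOnWith K φ (closedBall x₀ R) := by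
  have hbdd : Bornology.IsBounded (φ '' ball x₀ (R + 2)) :=
    ((isCompact_closedBall x₀ (R + 2)).image hφ.locallyLipschitz.continuous).isBounded.subset
      (image_mono ball_subset_closedBall)
  obtain ⟨K, hK⟩ := (hφ.subset (subset_univ _) (convex_ball _ _)).exists_lipschitzOnWith_of_isBounded
    (by linarith : R + 1 < R + 2) hbdd
  exact ⟨K, hK.mono (closedBall_subset_ball (by linarith))⟩

/-- `Lxbar` and `Lybar` unfold to this, with `p w = ‖w - z*‖_P`. -/
def growthModulus {α : Type*} (p e : α → ℝ) (t : ℝ) : ℝ :=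
  sSup {r : ℝ | ∃ w, 0 < p w ∧ p w ≤ t ∧ r = max (e w) 0 / p w}

section growthModulus

variable {α : Type*} {p e : α → ℝ} {t : ℝ}

theorem growthModulus_nonneg : 0 ≤ growthModulus p e t :=
  Real.sSup_nonneg fun _ ⟨_, hp, _, hr⟩ => hr ▸ div_nonneg (le_max_right _ _) hp.le

theorem le_growthModulus_mul {K : ℝ} (hK : ∀ w, p w ≤ t → e w ≤ K * p w) {w : α}
    (hw₀ : 0 ≤ p w) (hwt : p w ≤ t) : e w ≤ growthModulus p e t * p w := by
  rcases hw₀.eq_or_lt with hw₀ | hw₀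
  · simpa [← hw₀] using hK w hwt
  have hbdd : BddAbove {r : ℝ | ∃ w, 0 < p w ∧ p w ≤ t ∧ r = max (e w) 0 / p w} := by
    refine ⟨max K 0, ?_⟩
    rintro _ ⟨v, hv₀, hvt, rfl⟩
    rw [div_le_iff₀ hv₀]
    exact max_le ((hK v hvt).trans (by gcongr; exact le_max_left _ _)) (by positivity)
  have hw : max (e w) 0 / p w ≤ growthModulus p e t := le_csSup hbdd ⟨w, hw₀, hwt, rfl⟩
  rw [div_le_iff₀ hw₀] at hw
  exact (le_max_left _ _).trans hw

end growthModulus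

theorem mul_le_of_ofReal_le_ofReal_div {a L δ : ℝ} (ha : 0 ≤ a) (hL : 0 ≤ L)
    (h : ENNReal.ofReal δ ≤ ENNReal.ofReal a / ENNReal.ofReal L) : L * δ ≤ a := by
  rcases hL.eq_or_lt with rfl | hL
  · simpa using ha
  rw [← ENNReal.ofReal_div_of_pos hL, ENNReal.ofReal_le_ofReal_iff (div_nonneg ha hL.le),
    le_div_iff₀ hL] at h
  linarith

theorem one_sub_mul_mul_le_sub {a e L p t θ : ℝ} (hL : 0 ≤ L) (he : e ≤ L * p)
    (hLt : L * t ≤ a) (hp : p ≤ θ * t) : (1 - θ) * L * t ≤ a - e := by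
  nlinarith [mul_le_mul_of_nonneg_left hp hL]

theorem sub_pos_of_le_mul_of_lt {a e L p t : ℝ} (ha : 0 < a) (hL : 0 ≤ L) (he : e ≤ L * p)
    (hLt : L * t ≤ a) (hp : p < t) : 0 < a - e := by
  have hLp : L * p < a := by
    rcases hL.eq_or_lt with rfl | hL
    · simpa using ha
    · exact (mul_lt_mul_of_pos_left hp hL).trans_le hLt
  linarith

section moduli

variable {n m : ℕ} {g : Fin m → (Fin n → ℝ) → ℝ} {P : Matrix (Fin n ⊕ Fin m) (Fin n ⊕ Fin m) ℝ}
  {zstar : Zsp n m} {j : Fin m} {t : ℝ}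

theorem Lxbar_nonneg : 0 ≤ Lxbar g P zstar j t := growthModulus_nonneg

theorem Lybar_nonneg : 0 ≤ Lybar P zstar j t := growthModulus_nonneg

theorem sub_le_Lxbar_mul (hP : P.PosDef) (hg : ConvexOn ℝ univ (g j)) {w : Zsp n m}
    (hw : pnorm P (w - zstar) ≤ t) :
    g j (xPart w) - g j (xPart zstar) ≤ Lxbar g P zstar j t * pnorm P (w - zstar) := by
  obtain ⟨c, hc, hcP⟩ := exists_pos_mul_norm_le_pnorm hP
  obtain ⟨K, hK⟩ := hg.exists_lipschitzOnWith_closedBall (xPart zstar) (t / c)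
  refine le_growthModulus_mul (p := fun w => pnorm P (w - zstar))
    (e := fun w => g j (xPart w) - g j (xPart zstar)) (K := K / c) (fun w hw => ?_)
    (pnorm_nonneg P _) hw
  have hx : dist (xPart w) (xPart zstar) ≤ pnorm P (w - zstar) / c :=
    (norm_xPart_le (w - zstar)).trans ((le_div_iff₀' hc).2 (hcP _))
  have hr : pnorm P (w - zstar) / c ≤ t / c := by gcongr
  calc g j (xPart w) - g j (xPart zstar) ≤ K * dist (xPart w) (xPart zstar) :=
        (le_abs_self _).trans (hK.dist_le_mul _ (hx.trans hr) _
          (mem_closedBall_self ((div_nonneg (pnorm_nonneg P _) hc.le).trans hr)))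
    _ ≤ K * (pnorm P (w - zstar) / c) := by gcongr
    _ = K / c * pnorm P (w - zstar) := by ring

theorem sub_le_Lybar_mul (hP : P.PosDef) {w : Zsp n m} (hw : pnorm P (w - zstar) ≤ t) :
    yPart zstar j - yPart w j ≤ Lybar P zstar j t * pnorm P (w - zstar) := by
  obtain ⟨c, hc, hcP⟩ := exists_pos_mul_norm_le_pnorm hP
  refine le_growthModulus_mul (p := fun w => pnorm P (w - zstar))
    (e := fun w => yPart zstar j - yPart w j) (K := 1 / c) (fun w _ => ?_) (pnorm_nonneg P _) hw
  calc yPart zstar j - yPart w j ≤ |yPart (w - zstar) j| :=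
        (neg_sub (yPart w j) (yPart zstar j)).ge.trans (neg_le_abs _)
    _ ≤ ‖w - zstar‖ := abs_yPart_le _ j
    _ ≤ 1 / c * pnorm P (w - zstar) := by
        rw [one_div_mul_eq_div, le_div_iff₀' hc]; exact hcP _

theorem Lxbar_mul_le_of_le_DeltaFn (hΔ : ENNReal.ofReal t ≤ DeltaFn g P zstar t)
    (hj : g j (xPart zstar) < 0) : Lxbar g P zstar j t * t ≤ -g j (xPart zstar) :=
  mul_le_of_ofReal_le_ofReal_div (neg_nonneg.2 hj.le) Lxbar_nonneg
    (hΔ.trans ((min_le_left _ _).trans (iInf₂_le j hj)))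

theorem Lybar_mul_le_of_le_DeltaFn (hΔ : ENNReal.ofReal t ≤ DeltaFn g P zstar t)
    (hj : g j (xPart zstar) = 0) (hj' : 0 < yPart zstar j) : Lybar P zstar j t * t ≤ yPart zstar j :=
  mul_le_of_ofReal_le_ofReal_div hj'.le Lybar_nonneg
    (hΔ.trans ((min_le_right _ _).trans (iInf₂_le j ⟨hj, hj'⟩)))

end moduli

theorem stmt14_general
    (n m : ℕ)
    (g : Fin m → (Fin n → ℝ) → ℝ)
    (hg : ∀ j, ConvexOn ℝ Set.univ (g j))
    (P : Matrix (Fin n ⊕ Fin m) (Fin n ⊕ Fin m) ℝ) (hP : P.PosDef)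
    (zstar : Zsp n m)
    (δA : ℝ) (hδA : 0 < δA) (hfix : DeltaFn g P zstar δA = ENNReal.ofReal δA) :
    (∀ θ : ℝ, 0 < θ → θ < 1 → ∀ w : Zsp n m, pnorm P (w - zstar) ≤ θ * δA →
      (∀ j : Fin m, g j (xPart zstar) < 0 →
        (1 - θ) * Lxbar g P zstar j δA * δA ≤ -(g j (xPart w))) ∧
      (∀ j : Fin m, g j (xPart zstar) = 0 → 0 < yPart zstar j →
        (1 - θ) * Lybar P zstar j δA * δA ≤ yPart w j)) ∧
    (∀ w : Zsp n m, pnorm P (w - zstar) < δA →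
      (∀ j : Fin m, g j (xPart zstar) < 0 → g j (xPart w) < 0) ∧
      (∀ j : Fin m, g j (xPart zstar) = 0 → 0 < yPart zstar j → 0 < yPart w j)) := by
  have hΔ : ENNReal.ofReal δA ≤ DeltaFn g P zstar δA := hfix.ge
  refine ⟨fun θ _ hθ w hw => ⟨fun j hj => ?_, fun j hj hj' => ?_⟩,
    fun w hw => ⟨fun j hj => ?_, fun j hj hj' => ?_⟩⟩
  · have hwδ : pnorm P (w - zstar) ≤ δA := hw.trans (by nlinarith)
    have := one_sub_mul_mul_le_sub Lxbar_nonneg (sub_le_Lxbar_mul hP (hg j) hwδ)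
      (Lxbar_mul_le_of_le_DeltaFn hΔ hj) hw
    linarith
  · have hwδ : pnorm P (w - zstar) ≤ δA := hw.trans (by nlinarith)
    have := one_sub_mul_mul_le_sub Lybar_nonneg (sub_le_Lybar_mul hP hwδ)
      (Lybar_mul_le_of_le_DeltaFn hΔ hj hj') hw
    linarith
  · have := sub_pos_of_le_mul_of_lt (neg_pos.2 hj) Lxbar_nonneg
      (sub_le_Lxbar_mul hP (hg j) hw.le) (Lxbar_mul_le_of_le_DeltaFn hΔ hj) hw
    linarith
  · have := sub_pos_of_le_mul_of_lt hj' Lybar_nonneg (sub_le_Lybar_mul hP hw.le)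
      (Lybar_mul_le_of_le_DeltaFn hΔ hj hj') hw
    linarith

/-- Claim: quantitative margins inside the δ_A-ball. -/
theorem stmt14
    (n m : ℕ) (hn : 0 < n) (hm : 0 < m)
    (f : (Fin n → ℝ) → ℝ) (g : Fin m → (Fin n → ℝ) → ℝ)
    (hf : ConvexOn ℝ Set.univ f) (hg : ∀ j, ConvexOn ℝ Set.univ (g j))
    (P : Matrix (Fin n ⊕ Fin m) (Fin n ⊕ Fin m) ℝ) (hP : P.PosDef)
    (zstar : Zsp n m)
    -- δ_G is finite
    (hδfin : BddAbove (stabSet g P zstar))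
    (δA : ℝ) (hδA : 0 < δA) (hfix : DeltaFn g P zstar δA = ENNReal.ofReal δA) :
    (∀ θ : ℝ, 0 < θ → θ < 1 → ∀ w : Zsp n m, pnorm P (w - zstar) ≤ θ * δA →
      (∀ j : Fin m, g j (xPart zstar) < 0 →
        (1 - θ) * Lxbar g P zstar j δA * δA ≤ -(g j (xPart w))) ∧
      (∀ j : Fin m, g j (xPart zstar) = 0 → 0 < yPart zstar j →
        (1 - θ) * Lybar P zstar j δA * δA ≤ yPart w j)) ∧
    (∀ w : Zsp n m, pnorm P (w - zstar) < δA →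
      (∀ j : Fin m, g j (xPart zstar) < 0 → g j (xPart w) < 0) ∧
      (∀ j : Fin m, g j (xPart zstar) = 0 → 0 < yPart zstar j → 0 < yPart w j)) :=
  stmt14_general n m g hg P hP zstar δA hδA hfix
end
end

section
/- Suppose z* = (x*, y*) satisfies f(x*) − h(y*) ≤ 0, G(x*) ≤ 0 componentwise and y* ≥ 0 componentwise, that g_j(x*) < 0 for every j ∈ N and y*_j > 0 for every j ∈ B_a, that the radius of active-set stability δ_G is finite, and that B = {1, …, q}. Then S*_L = {(x, (w, 0)) : (x, w) ∈ S*_B}, where (w, 0) ∈ ℝᵐ is the vector whose first q coordinates are w and whose remaining coordinates (indexed by N) are zero; that is, (x, y) ∈ S*_L if and only if y_j = 0 for every j ∈ N and the pair (x, (y₁, …, y_q)) lies in S*_B. -/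
noncomputable section

open scoped ENNReal
open Classical Filter Topology

/-- The dual function of the reduced problem using only the first `q` constraints. -/
def hdualB {n m : ℕ} (f : (Fin n → ℝ) → ℝ) (g : Fin m → (Fin n → ℝ) → ℝ)
    (q : ℕ) (hq : q ≤ m) (w : Fin q → ℝ) : EReal :=
  ⨅ x : Fin n → ℝ, ((f x + ∑ j : Fin q, w j * g (Fin.castLE hq j) x : ℝ) : EReal)

/-- The primal-dual solution set S*_B of the reduced problem. -/
def SstarB {n m : ℕ} (f : (Fin n → ℝ) → ℝ) (g : Fin m → (Fin n → ℝ) → ℝ)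
    (q : ℕ) (hq : q ≤ m) : Set ((Fin n → ℝ) × (Fin q → ℝ)) :=
  {p | ((f p.1 : ℝ) : EReal) ≤ hdualB f g q hq p.2 ∧
    (∀ j : Fin q, g (Fin.castLE hq j) p.1 ≤ 0) ∧
    ∀ j : Fin q, 0 ≤ p.2 j}

/-!
The multipliers of every point of S*_L vanish on N by complementary slackness. Since z* is a
saddle point, its own multipliers vanish on N, so for (x, y) ∈ S*_L the duality gap at z* gives
f(x*) ≤ f(x) + ⟨y*, G(x)⟩ ≤ f(x), the constraints of B being satisfied at x. The gap at (x, y)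
then reads f(x) ≤ f(x*) + ⟨y, G(x*)⟩ ≤ f(x), so each term y_j g_j(x*) vanishes, and g_j(x*) < 0
forces y_j = 0 for j ∈ N. Once y vanishes on N, h(y) = h_B(y_B) and the two sets agree.
-/

theorem Fin.sum_eq_sum_castLE {M : Type*} [AddCommMonoid M] {q m : ℕ} (hq : q ≤ m)
    (F : Fin m → M) (hF : ∀ j : Fin m, q ≤ (j : ℕ) → F j = 0) :
    ∑ j : Fin m, F j = ∑ j : Fin q, F (Fin.castLE hq j) := by
  refine (Finset.sum_of_injOn (Fin.castLE hq) (Fin.castLE_injective hq).injOn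
    (fun _ _ => Finset.mem_coe.2 (Finset.mem_univ _)) (fun j _ hj => hF j ?_) (fun _ _ => rfl)).symm
  by_contra! hjq
  exact hj ⟨⟨j, hjq⟩, Finset.mem_coe.2 (Finset.mem_univ _), rfl⟩

section Duality

variable {n m : ℕ} {f : (Fin n → ℝ) → ℝ} {g : Fin m → (Fin n → ℝ) → ℝ}

theorem le_hdualFn_iff {x : Fin n → ℝ} {y : Fin m → ℝ} :
    ((f x : ℝ) : EReal) ≤ hdualFn f g y ↔ ∀ x', f x ≤ f x' + ∑ j, y j * g j x' := by
  simp only [hdualFn, le_iInf_iff, EReal.coe_le_coe_iff]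

theorem le_of_le_hdualFn {x₀ x₁ : Fin n → ℝ} {y : Fin m → ℝ}
    (hgap : ((f x₀ : ℝ) : EReal) ≤ hdualFn f g y) (hslack : ∀ j, y j * g j x₁ ≤ 0) :
    f x₀ ≤ f x₁ := by
  linarith [le_hdualFn_iff.1 hgap x₁, Finset.sum_nonpos (s := Finset.univ) fun j _ => hslack j]

theorem mul_eq_zero_of_le_hdualFn {x₀ x₁ : Fin n → ℝ} {y : Fin m → ℝ}
    (hgap : ((f x₀ : ℝ) : EReal) ≤ hdualFn f g y) (hslack : ∀ j, y j * g j x₁ ≤ 0)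
    (hle : f x₁ ≤ f x₀) (j : Fin m) : y j * g j x₁ = 0 := by
  have hsum : ∑ j, y j * g j x₁ = 0 :=
    le_antisymm (Finset.sum_nonpos fun j _ => hslack j) (by linarith [le_hdualFn_iff.1 hgap x₁])
  exact (Finset.sum_eq_zero_iff_of_nonpos fun j _ => hslack j).1 hsum j (Finset.mem_univ j)

theorem eq_zero_of_le_hdualFn {x₀ x₁ : Fin n → ℝ} {y : Fin m → ℝ}
    (hgap : ((f x₀ : ℝ) : EReal) ≤ hdualFn f g y) (hslack : ∀ j, y j * g j x₁ ≤ 0)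
    (hle : f x₁ ≤ f x₀) {j : Fin m} (hj : g j x₁ < 0) : y j = 0 :=
  (mul_eq_zero.1 (mul_eq_zero_of_le_hdualFn hgap hslack hle j)).resolve_right hj.ne

theorem hdualFn_eq_hdualB (q : ℕ) (hq : q ≤ m) {y : Fin m → ℝ}
    (hy : ∀ j : Fin m, q ≤ (j : ℕ) → y j = 0) :
    hdualFn f g y = hdualB f g q hq (fun j => y (Fin.castLE hq j)) := by
  refine iInf_congr fun x => ?_
  rw [Fin.sum_eq_sum_castLE hq _ fun j hj => by rw [hy j hj, zero_mul]]

end Duality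

theorem stmt19_general
    (n m : ℕ)
    (f : (Fin n → ℝ) → ℝ) (g : Fin m → (Fin n → ℝ) → ℝ)
    (zstar : Zsp n m)
    -- z* is a primal-dual solution of the full problem
    (hgap : ((f (xPart zstar) : ℝ) : EReal) ≤ hdualFn f g (yPart zstar))
    (hfeas : ∀ j : Fin m, g j (xPart zstar) ≤ 0)
    (hdfeas : ∀ j : Fin m, 0 ≤ yPart zstar j)
    -- B = {1, …, q}
    (q : ℕ) (hq : q ≤ m)
    (hB : ∀ j : Fin m, g j (xPart zstar) = 0 ↔ (j : ℕ) < q) :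
    ∀ z : Zsp n m,
      z ∈ SstarL f g zstar ↔
        ((∀ j : Fin m, q ≤ (j : ℕ) → yPart z j = 0) ∧
          (xPart z, fun j : Fin q => yPart z (Fin.castLE hq j)) ∈
            SstarB f g q hq) := by
  intro z
  have hN : ∀ j : Fin m, q ≤ (j : ℕ) → g j (xPart zstar) < 0 := fun j hj =>
    (hfeas j).lt_of_ne fun h => (hB j |>.1 h).not_ge hj
  have hslack : ∀ j, yPart zstar j * g j (xPart zstar) ≤ 0 := fun j =>
    mul_nonpos_of_nonneg_of_nonpos (hdfeas j) (hfeas j)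
  have hystar : ∀ j : Fin m, q ≤ (j : ℕ) → yPart zstar j = 0 := fun j hj =>
    eq_zero_of_le_hdualFn hgap hslack le_rfl (hN j hj)
  constructor
  · rintro ⟨hgapz, hfeasz, hdfeasz⟩
    have hslackz : ∀ j, yPart z j * g j (xPart zstar) ≤ 0 := fun j =>
      mul_nonpos_of_nonneg_of_nonpos (hdfeasz j) (hfeas j)
    have hle : f (xPart zstar) ≤ f (xPart z) := le_of_le_hdualFn hgap fun j => by
      rcases lt_or_ge (j : ℕ) q with hj | hj
      · exact mul_nonpos_of_nonneg_of_nonpos (hdfeas j) (hfeasz j ((hB j).2 hj))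
      · rw [hystar j hj, zero_mul]
    have hy : ∀ j : Fin m, q ≤ (j : ℕ) → yPart z j = 0 := fun j hj =>
      eq_zero_of_le_hdualFn hgapz hslackz hle (hN j hj)
    exact ⟨hy, hdualFn_eq_hdualB q hq hy ▸ hgapz, fun j => hfeasz _ ((hB _).2 j.isLt),
      fun j => hdfeasz _⟩
  · rintro ⟨hy, hgapB, hfeasB, hdfeasB⟩
    refine ⟨(hdualFn_eq_hdualB q hq hy).symm ▸ hgapB, fun j hj => hfeasB ⟨j, (hB j).1 hj⟩,
      fun j => ?_⟩
    rcases lt_or_ge (j : ℕ) q with hj | hj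
    · exact hdfeasB ⟨j, hj⟩
    · exact (hy j hj).ge

/-- Proposition: S*_L is S*_B with the nonactive multipliers set to 0. -/
theorem stmt19
    (n m : ℕ) (hn : 0 < n) (hm : 0 < m)
    (f : (Fin n → ℝ) → ℝ) (g : Fin m → (Fin n → ℝ) → ℝ)
    (hf : ConvexOn ℝ Set.univ f) (hg : ∀ j, ConvexOn ℝ Set.univ (g j))
    (P : Matrix (Fin n ⊕ Fin m) (Fin n ⊕ Fin m) ℝ) (hP : P.PosDef)
    (zstar : Zsp n m)
    -- z* is a primal-dual solution of the full problem
    (hgap : ((f (xPart zstar) : ℝ) : EReal) ≤ hdualFn f g (yPart zstar))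
    (hfeas : ∀ j : Fin m, g j (xPart zstar) ≤ 0)
    (hdfeas : ∀ j : Fin m, 0 ≤ yPart zstar j)
    -- δ_G is finite
    (hδfin : BddAbove (stabSet g P zstar))
    -- B = {1, …, q}
    (q : ℕ) (hq : q ≤ m)
    (hB : ∀ j : Fin m, g j (xPart zstar) = 0 ↔ (j : ℕ) < q) :
    ∀ z : Zsp n m,
      z ∈ SstarL f g zstar ↔
        ((∀ j : Fin m, q ≤ (j : ℕ) → yPart z j = 0) ∧
          (xPart z, fun j : Fin q => yPart z (Fin.castLE hq j)) ∈
            SstarB f g q hq) :=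
  stmt19_general n m f g zstar hgap hfeas hdfeas q hq hB
end
end
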